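/- arXiv:2207.14738 — 3 statements merged into one kernel-verified Lean document; each statement's English description precedes it below -/
import Mathlib

section
/- Suppose Ω ⊂ P(ℝ^d) is a properly convex domain with Hilbert metric dist_Ω. If p₁, p₂, q₁, q₂ ∈ Ω, then the Hausdorff distance with respect to dist_Ω between the projective line segments [p₁,q₁] and [p₂,q₂] is at most max{dist_Ω(p₁,p₂), dist_Ω(q₁,q₂)}. -/
noncomputable section
open scoped Classical

/-! A properly convex domain `Ω ⊂ P(ℝ^d)` is, in an affine chart containing it as a bounded
set, an open bounded convex subset of an affine space; the Hilbert metric is computed in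
this chart via the cross ratio.  We formalize Statement 2 in the affine chart. -/

variable {E : Type*} [NormedAddCommGroup E] [NormedSpace ℝ E]

/-- The parameters `t` for which the point `p + t(q-p)` on the line through `p` and `q`
lies in `Ω`. -/
def lineParams (Ω : Set E) (p q : E) : Set ℝ := {t : ℝ | p + t • (q - p) ∈ Ω}

/-- The Hilbert distance on a bounded convex open set `Ω`:
`dist_Ω(p,q) = (1/2) log [a,p,q,b]`, where `a = p + α(q-p)`, `b = p + β(q-p)` are the two
boundary points of the line through `p` and `q` (`α = inf`, `β = sup` of `lineParams`),
ordered as `a,p,q,b`, and `[a,p,q,b] = ((1-α)·β)/((-α)·(β-1))` is the cross ratio. -/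
def hilbertDist (Ω : Set E) (p q : E) : ℝ :=
  if p = q then 0
  else
    (1 / 2) * Real.log
      (((1 - sInf (lineParams Ω p q)) * sSup (lineParams Ω p q)) /
        ((-(sInf (lineParams Ω p q))) * (sSup (lineParams Ω p q) - 1)))

/-- The Hausdorff distance between subsets of `Ω` with respect to the Hilbert metric. -/
def hilbertHausdorffDist (Ω : Set E) (A B : Set E) : ℝ :=
  max (sSup ((fun a => sInf (hilbertDist Ω a '' B)) '' A))
    (sSup ((fun b => sInf ((fun a => hilbertDist Ω a b) '' A)) '' B))

/-! Send `x ∈ Ω` to `(1, x) ∈ ℝ × E` and order `ℝ × E` by the convex cone over `closure Ω`.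
Birkhoff's description of the Hilbert metric then reads: `dist_Ω(z, w) ≤ M` iff some positive
multiple `v` of `(1, w)` satisfies `(1, z) ≤ e^M v` and `v ≤ e^M (1, z)`. Such sandwiches are
preserved by nonnegative combinations, so for `z = a x + b y ∈ [x, y]`, adding `a` times the
sandwich for `(x, x')` to `b` times the one for `(y, y')` sandwiches `(1, z)` against a multiple
of `(1, w)` for some `w ∈ [x', y']`; hence `dist_Ω(z, w) ≤ max (dist_Ω(x, x'), dist_Ω(y, y'))`. -/

open Set Bornology
open scoped Pointwise

section LineParams

variable {Ω : Set E} {p q : E}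

theorem isOpen_lineParams (hopen : IsOpen Ω) (p q : E) : IsOpen (lineParams Ω p q) :=
  hopen.preimage (by fun_prop)

theorem isBounded_lineParams (hbdd : IsBounded Ω) (hpq : p ≠ q) :
    IsBounded (lineParams Ω p q) := by
  obtain ⟨C, hC⟩ := hbdd.exists_norm_le
  have hqp : 0 < ‖q - p‖ := norm_pos_iff.2 (sub_ne_zero.2 hpq.symm)
  refine isBounded_iff_forall_norm_le.2 ⟨(C + ‖p‖) / ‖q - p‖, fun t ht => ?_⟩
  rw [le_div_iff₀ hqp, ← norm_smul]
  calc ‖t • (q - p)‖ = ‖(p + t • (q - p)) - p‖ := by rw [add_sub_cancel_left]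
    _ ≤ ‖p + t • (q - p)‖ + ‖p‖ := norm_sub_le _ _
    _ ≤ C + ‖p‖ := by gcongr; exact hC _ ht

theorem zero_mem_lineParams (hp : p ∈ Ω) : (0 : ℝ) ∈ lineParams Ω p q := by
  simpa [lineParams] using hp

theorem one_mem_lineParams (hq : q ∈ Ω) : (1 : ℝ) ∈ lineParams Ω p q := by
  simpa [lineParams] using hq

theorem sInf_lineParams_lt_zero (hopen : IsOpen Ω) (hbdd : IsBounded Ω) (hp : p ∈ Ω)
    (hpq : p ≠ q) : sInf (lineParams Ω p q) < 0 := by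
  obtain ⟨t, ht, htS⟩ :=
    (show ∀ᶠ t in nhds 0, t ∈ lineParams Ω p q from
      (isOpen_lineParams hopen p q).mem_nhds (zero_mem_lineParams hp)).exists_lt
  exact (csInf_le (isBounded_lineParams hbdd hpq).bddBelow htS).trans_lt ht

theorem one_lt_sSup_lineParams (hopen : IsOpen Ω) (hbdd : IsBounded Ω) (hq : q ∈ Ω)
    (hpq : p ≠ q) : 1 < sSup (lineParams Ω p q) := by
  obtain ⟨t, ht, htS⟩ :=
    (show ∀ᶠ t in nhds 1, t ∈ lineParams Ω p q from
      (isOpen_lineParams hopen p q).mem_nhds (one_mem_lineParams hq)).exists_gt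
  exact ht.trans_le (le_csSup (isBounded_lineParams hbdd hpq).bddAbove htS)

theorem lineParams_swap (Ω : Set E) (p q : E) :
    lineParams Ω q p = (fun t => 1 - t) '' lineParams Ω p q := by
  ext t
  have h : q + t • (p - q) = p + (1 - t) • (q - p) := by module
  refine ⟨fun ht => ⟨1 - t, by simpa [lineParams, h] using ht, sub_sub_cancel 1 t⟩, ?_⟩
  rintro ⟨s, hs, rfl⟩
  simpa [lineParams, h] using hs

theorem sSup_lineParams_swap (hbdd : IsBounded Ω) (hp : p ∈ Ω) (hpq : p ≠ q) :
    sSup (lineParams Ω q p) = 1 - sInf (lineParams Ω p q) := by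
  rw [lineParams_swap]
  exact (antitone_const_tsub.map_csInf_of_continuousAt (by fun_prop)
    ⟨0, zero_mem_lineParams hp⟩ (isBounded_lineParams hbdd hpq).bddBelow).symm

theorem add_smul_sub_mem_closure_iff (hopen : IsOpen Ω) (hconv : Convex ℝ Ω)
    (hbdd : IsBounded Ω) (hp : p ∈ Ω) (hq : q ∈ Ω) (hpq : p ≠ q) {t : ℝ} (ht : 0 ≤ t) :
    p + t • (q - p) ∈ closure Ω ↔ t ≤ sSup (lineParams Ω p q) := by
  set β := sSup (lineParams Ω p q)
  have hβ : 0 < β := one_pos.trans (one_lt_sSup_lineParams hopen hbdd hq hpq)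
  constructor
  · intro hmem
    by_contra! hβt
    obtain ⟨s, hβs, hst⟩ := exists_between hβt
    have ht0 : t ≠ 0 := (hβ.trans hβt).ne'
    have hs : p + s • (q - p) ∈ Ω := by
      have := hconv.combo_interior_closure_mem_interior (hopen.interior_eq.symm ▸ hp) hmem
        (sub_pos.2 ((div_lt_one (hβ.trans hβt)).2 hst))
        (div_nonneg (hβ.trans hβs).le (hβ.trans hβt).le) (sub_add_cancel 1 (s / t))
      rwa [hopen.interior_eq, smul_add, smul_smul, div_mul_cancel₀ _ ht0,
        ← add_assoc, ← add_smul, sub_add_cancel, one_smul] at this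
    exact hβs.not_ge (le_csSup (isBounded_lineParams hbdd hpq).bddAbove hs)
  · intro htβ
    have hend : p + β • (q - p) ∈ closure Ω :=
      map_mem_closure (f := fun t : ℝ => p + t • (q - p)) (by fun_prop)
        (csSup_mem_closure ⟨0, zero_mem_lineParams hp⟩ (isBounded_lineParams hbdd hpq).bddAbove)
        fun _ h => h
    refine hconv.closure.segment_subset (subset_closure hp) hend
      ⟨1 - t / β, t / β, sub_nonneg.2 ((div_le_one hβ).2 htβ), by positivity,
        sub_add_cancel 1 _, ?_⟩
    rw [smul_add, smul_smul, div_mul_cancel₀ _ hβ.ne', ← add_assoc, ← add_smul, sub_add_cancel,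
      one_smul]

end LineParams

section Cone

variable {Ω : Set E}

def coneOver (Ω : Set E) : Set (ℝ × E) := {v | 0 ≤ v.1 ∧ v.2 ∈ v.1 • closure Ω}

theorem mk_one_mem_coneOver {x : E} (hx : x ∈ Ω) : ((1 : ℝ), x) ∈ coneOver Ω :=
  ⟨zero_le_one, by simpa using subset_closure hx⟩

theorem add_mem_coneOver (hconv : Convex ℝ Ω) {u v : ℝ × E} (hu : u ∈ coneOver Ω)
    (hv : v ∈ coneOver Ω) : u + v ∈ coneOver Ω :=
  ⟨add_nonneg hu.1 hv.1, by
    rw [Prod.fst_add, hconv.closure.add_smul hu.1 hv.1]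
    exact add_mem_add hu.2 hv.2⟩

theorem smul_mem_coneOver {c : ℝ} (hc : 0 ≤ c) {v : ℝ × E} (hv : v ∈ coneOver Ω) :
    c • v ∈ coneOver Ω :=
  ⟨mul_nonneg hc hv.1, by
    rw [Prod.smul_fst, Prod.smul_snd, smul_eq_mul, ← smul_smul]
    exact smul_mem_smul_set hv.2⟩

theorem smul_mem_coneOver_iff {c : ℝ} (hc : 0 < c) {v : ℝ × E} :
    c • v ∈ coneOver Ω ↔ v ∈ coneOver Ω :=
  ⟨fun h => by simpa [smul_smul, hc.ne'] using smul_mem_coneOver (inv_nonneg.2 hc.le) h,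
    smul_mem_coneOver hc.le⟩

end Cone

section MaxRatio

variable {Ω : Set E} {p q : E}

variable (Ω) in
/-- Birkhoff's `M(p/q) = inf {μ | (1, p) ≤ μ (1, q)}` for the order of `coneOver Ω`, computed from
the parameter `β` at which the ray from `p` through `q` leaves `closure Ω`
(see `smul_sub_mem_coneOver_iff`). -/
def maxRatio (p q : E) : ℝ := sSup (lineParams Ω p q) / (sSup (lineParams Ω p q) - 1)

theorem one_lt_maxRatio (hopen : IsOpen Ω) (hbdd : IsBounded Ω) (hq : q ∈ Ω) (hpq : p ≠ q) :
    1 < maxRatio Ω p q := by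
  have hβ := one_lt_sSup_lineParams hopen hbdd hq hpq
  rw [maxRatio, one_lt_div (by linarith)]
  linarith

theorem smul_sub_mem_coneOver_iff (hopen : IsOpen Ω) (hconv : Convex ℝ Ω) (hbdd : IsBounded Ω)
    (hp : p ∈ Ω) (hq : q ∈ Ω) (hpq : p ≠ q) {μ : ℝ} :
    μ • ((1 : ℝ), q) - ((1 : ℝ), p) ∈ coneOver Ω ↔ maxRatio Ω p q ≤ μ := by
  have hβ := one_lt_sSup_lineParams hopen hbdd hq hpq
  have hmem : μ • ((1 : ℝ), q) - ((1 : ℝ), p) ∈ coneOver Ω ↔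
      0 ≤ μ - 1 ∧ μ • q - p ∈ (μ - 1) • closure Ω := by
    simp [coneOver]
  rcases lt_or_ge 1 μ with hμ | hμ
  · have hray : (μ - 1)⁻¹ • (μ • q - p) = p + (μ / (μ - 1)) • (q - p) := by
      have : μ - 1 ≠ 0 := by linarith
      rw [inv_smul_eq_iff₀ this, smul_add, smul_smul, mul_div_cancel₀ _ this]
      module
    rw [hmem, and_iff_right (by linarith), mem_smul_set_iff_inv_smul_mem₀ (by linarith), hray,
      add_smul_sub_mem_closure_iff hopen hconv hbdd hp hq hpq (by positivity),
      maxRatio, div_le_iff₀ (by linarith), div_le_iff₀ (by linarith)]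
    constructor <;> intro h <;> linarith
  · refine iff_of_false (fun h => hpq ?_)
      (hμ.trans_lt (one_lt_maxRatio hopen hbdd hq hpq)).not_ge
    obtain ⟨hμ1, h⟩ := hmem.1 h
    obtain rfl : μ = 1 := by linarith
    rw [sub_self] at h
    simpa [sub_eq_zero, eq_comm] using zero_smul_set_subset _ h

end MaxRatio

section HilbertDist

variable {Ω : Set E} {p q : E}

theorem hilbertDist_eq_log_maxRatio (hbdd : IsBounded Ω) (hp : p ∈ Ω) (hpq : p ≠ q) :
    hilbertDist Ω p q = 1 / 2 * Real.log (maxRatio Ω p q * maxRatio Ω q p) := by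
  rw [hilbertDist, if_neg hpq, maxRatio, maxRatio, sSup_lineParams_swap hbdd hp hpq,
    div_mul_div_comm, sub_sub_cancel_left, mul_comm (sSup _), mul_comm (sSup _ - 1)]

theorem hilbertDist_comm (hbdd : IsBounded Ω) (hp : p ∈ Ω) (hq : q ∈ Ω) :
    hilbertDist Ω p q = hilbertDist Ω q p := by
  rcases eq_or_ne p q with rfl | hpq
  · rfl
  rw [hilbertDist_eq_log_maxRatio hbdd hp hpq, hilbertDist_eq_log_maxRatio hbdd hq hpq.symm,
    mul_comm (maxRatio Ω p q)]

theorem hilbertDist_nonneg (hopen : IsOpen Ω) (hbdd : IsBounded Ω) (hp : p ∈ Ω) (hq : q ∈ Ω) :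
    0 ≤ hilbertDist Ω p q := by
  rcases eq_or_ne p q with rfl | hpq
  · simp [hilbertDist]
  rw [hilbertDist_eq_log_maxRatio hbdd hp hpq]
  have := one_lt_maxRatio hopen hbdd hq hpq
  have := one_lt_maxRatio hopen hbdd hp hpq.symm
  have : 0 ≤ Real.log (maxRatio Ω p q * maxRatio Ω q p) := Real.log_nonneg (by nlinarith)
  positivity

theorem exists_le_mul_and_le_div_iff {a b R : ℝ} (ha : 0 < a) (hR : 0 < R) :
    (∃ c > 0, a ≤ R * c ∧ b ≤ R / c) ↔ a * b ≤ R ^ 2 := by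
  constructor
  · rintro ⟨c, hc, hac, hbc⟩
    rw [le_div_iff₀ hc] at hbc
    nlinarith
  · intro hab
    refine ⟨a / R, by positivity, by rw [mul_div_cancel₀ _ hR.ne'], ?_⟩
    rw [div_div_eq_mul_div, le_div_iff₀ ha]
    nlinarith

theorem hilbertDist_le_iff (hopen : IsOpen Ω) (hconv : Convex ℝ Ω) (hbdd : IsBounded Ω)
    {z w : E} (hz : z ∈ Ω) (hw : w ∈ Ω) {M : ℝ} (hM : 0 ≤ M) :
    hilbertDist Ω z w ≤ M ↔ ∃ c > 0,
      (Real.exp M * c) • ((1 : ℝ), w) - ((1 : ℝ), z) ∈ coneOver Ω ∧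
        Real.exp M • ((1 : ℝ), z) - c • ((1 : ℝ), w) ∈ coneOver Ω := by
  set R := Real.exp M
  have hR : 0 < R := Real.exp_pos M
  rcases eq_or_ne z w with rfl | hzw
  · have hmem : (R - 1) • ((1 : ℝ), z) ∈ coneOver Ω :=
      smul_mem_coneOver (sub_nonneg.2 (Real.one_le_exp hM)) (mk_one_mem_coneOver hz)
    simp only [hilbertDist, if_true, hM, true_iff]
    exact ⟨1, one_pos, by convert hmem using 1; module, by convert hmem using 1; module⟩
  have ha := one_lt_maxRatio hopen hbdd hw hzw
  have hb := one_lt_maxRatio hopen hbdd hz hzw.symm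
  have hsq : R ^ 2 = Real.exp (2 * M) := by rw [sq, ← Real.exp_add, two_mul]
  calc hilbertDist Ω z w ≤ M ↔ maxRatio Ω z w * maxRatio Ω w z ≤ R ^ 2 := by
        rw [hilbertDist_eq_log_maxRatio hbdd hz hzw, hsq,
          ← Real.log_le_iff_le_exp (by nlinarith)]
        constructor <;> intro h <;> linarith
    _ ↔ ∃ c > 0, maxRatio Ω z w ≤ R * c ∧ maxRatio Ω w z ≤ R / c :=
        (exists_le_mul_and_le_div_iff (by linarith) hR).symm
    _ ↔ _ := by
        refine exists_congr fun c => and_congr_right fun hc => ?_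
        have hsplit : R • ((1 : ℝ), z) - c • ((1 : ℝ), w) =
            c • ((R / c) • ((1 : ℝ), z) - ((1 : ℝ), w)) := by
          rw [smul_sub, smul_smul, mul_div_cancel₀ _ hc.ne']
        rw [smul_sub_mem_coneOver_iff hopen hconv hbdd hz hw hzw, hsplit,
          smul_mem_coneOver_iff hc, smul_sub_mem_coneOver_iff hopen hconv hbdd hw hz hzw.symm]

end HilbertDist

section Segments

variable {Ω : Set E}

theorem exists_mem_segment_hilbertDist_le (hopen : IsOpen Ω) (hconv : Convex ℝ Ω)
    (hbdd : IsBounded Ω) {x y x' y' z : E} (hx : x ∈ Ω) (hy : y ∈ Ω) (hx' : x' ∈ Ω)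
    (hy' : y' ∈ Ω) (hz : z ∈ segment ℝ x y) :
    ∃ w ∈ segment ℝ x' y', hilbertDist Ω z w ≤ max (hilbertDist Ω x x') (hilbertDist Ω y y') := by
  set M := max (hilbertDist Ω x x') (hilbertDist Ω y y')
  have hM : 0 ≤ M := le_max_of_le_left (hilbertDist_nonneg hopen hbdd hx hx')
  obtain ⟨c₁, hc₁, hx₁, hx₂⟩ :=
    (hilbertDist_le_iff hopen hconv hbdd hx hx' hM).1 (le_max_left _ _)
  obtain ⟨c₂, hc₂, hy₁, hy₂⟩ :=
    (hilbertDist_le_iff hopen hconv hbdd hy hy' hM).1 (le_max_right _ _)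
  have hzΩ := hconv.segment_subset hx hy hz
  obtain ⟨a, b, ha, hb, hab, rfl⟩ := hz
  set C := a * c₁ + b * c₂
  have hC : 0 < C := by
    rcases ha.lt_or_eq with ha | rfl
    · positivity
    · obtain rfl : b = 1 := by linarith
      simpa [C] using hc₂
  set w := (a * c₁ / C) • x' + (b * c₂ / C) • y'
  have hw : w ∈ segment ℝ x' y' :=
    ⟨_, _, by positivity, by positivity, by rw [← add_div, div_self hC.ne'], rfl⟩
  have hzlift : ((1 : ℝ), a • x + b • y) = a • ((1 : ℝ), x) + b • ((1 : ℝ), y) := by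
    ext <;> simp [hab]
  have hwlift : C • ((1 : ℝ), w) = (a * c₁) • ((1 : ℝ), x') + (b * c₂) • ((1 : ℝ), y') := by
    ext
    · simp [C]
    · simp only [w, Prod.smul_snd, Prod.snd_add, smul_add, smul_smul]
      congr 2 <;> field_simp
  refine ⟨w, hw, (hilbertDist_le_iff hopen hconv hbdd hzΩ (hconv.segment_subset hx' hy' hw) hM).2
    ⟨C, hC, ?_, ?_⟩⟩
  · rw [mul_smul, hwlift, hzlift]
    convert add_mem_coneOver hconv (smul_mem_coneOver ha hx₁) (smul_mem_coneOver hb hy₁) using 1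
    module
  · rw [hwlift, hzlift]
    convert add_mem_coneOver hconv (smul_mem_coneOver ha hx₂) (smul_mem_coneOver hb hy₂) using 1
    module

theorem hilbertHausdorffDist_le (hopen : IsOpen Ω) (hbdd : IsBounded Ω) {A B : Set E}
    (hA : A ⊆ Ω) (hB : B ⊆ Ω) {M : ℝ} (hM : 0 ≤ M)
    (hAB : ∀ a ∈ A, ∃ b ∈ B, hilbertDist Ω a b ≤ M)
    (hBA : ∀ b ∈ B, ∃ a ∈ A, hilbertDist Ω a b ≤ M) :
    hilbertHausdorffDist Ω A B ≤ M := by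
  refine max_le (Real.sSup_le ?_ hM) (Real.sSup_le ?_ hM)
  · rintro _ ⟨a, ha, rfl⟩
    obtain ⟨b, hb, hd⟩ := hAB a ha
    refine csInf_le_of_le ⟨0, ?_⟩ ⟨b, hb, rfl⟩ hd
    rintro _ ⟨b', hb', rfl⟩
    exact hilbertDist_nonneg hopen hbdd (hA ha) (hB hb')
  · rintro _ ⟨b, hb, rfl⟩
    obtain ⟨a, ha, hd⟩ := hBA b hb
    refine csInf_le_of_le ⟨0, ?_⟩ ⟨a, ha, rfl⟩ hd
    rintro _ ⟨a', ha', rfl⟩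
    exact hilbertDist_nonneg hopen hbdd (hA ha') (hB hb)

end Segments

/-- cf. [IZ2021, Prop. 5.3]: in a properly convex domain `Ω` with its Hilbert
metric, for `p₁, p₂, q₁, q₂ ∈ Ω` the Hausdorff distance between the segments `[p₁,q₁]` and
`[p₂,q₂]` is at most `max{dist_Ω(p₁,p₂), dist_Ω(q₁,q₂)}`. -/
theorem stmt2 (Ω : Set E) (hopen : IsOpen Ω) (hconv : Convex ℝ Ω)
    (hbdd : Bornology.IsBounded Ω) (p₁ p₂ q₁ q₂ : E)
    (hp₁ : p₁ ∈ Ω) (hp₂ : p₂ ∈ Ω) (hq₁ : q₁ ∈ Ω) (hq₂ : q₂ ∈ Ω) :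
    hilbertHausdorffDist Ω (segment ℝ p₁ q₁) (segment ℝ p₂ q₂) ≤
      max (hilbertDist Ω p₁ p₂) (hilbertDist Ω q₁ q₂) := by
  have hseg₁ := hconv.segment_subset hp₁ hq₁
  have hseg₂ := hconv.segment_subset hp₂ hq₂
  refine hilbertHausdorffDist_le hopen hbdd hseg₁ hseg₂
    (le_max_of_le_left (hilbertDist_nonneg hopen hbdd hp₁ hp₂))
    (fun z hz => exists_mem_segment_hilbertDist_le hopen hconv hbdd hp₁ hq₁ hp₂ hq₂ hz)
    (fun z hz => ?_)
  obtain ⟨w, hw, hd⟩ := exists_mem_segment_hilbertDist_le hopen hconv hbdd hp₂ hq₂ hp₁ hq₁ hz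
  refine ⟨w, hw, ?_⟩
  rwa [hilbertDist_comm hbdd (hseg₁ hw) (hseg₂ hz), hilbertDist_comm hbdd hp₁ hp₂,
    hilbertDist_comm hbdd hq₁ hq₂]
end
end

section
/- Let X ⊂ P(ℝ^d) be a connected subset contained in some affine chart. If 𝔸₁ and 𝔸₂ are two affine charts of P(ℝ^d) each containing X, then the convex hull of X computed in 𝔸₁ equals the convex hull of X computed in 𝔸₂. -/
/-!
The sign of `f₁ f₂` at a lift of `p` does not depend on the lift and does not vanish on `X`, so
by connectedness it is constant on `X`; replacing `f₂` by `-f₂`, which does not change the chart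
hull, we may assume it is positive. Then each point of `X` in the first chart is a positive
multiple of the same point in the second chart, so the convex hull in the first chart lies in the
cone over the convex hull in the second chart, and both have the same image in `P(ℝ^d)`.
-/

noncomputable section

open Projectivization
open scoped LinearAlgebra.Projectivization

/-- The quotient topology on the projectivization of a topological vector space. -/
instance projTopology {E : Type*} [AddCommGroup E] [Module ℝ E] [TopologicalSpace E] :
    TopologicalSpace (ℙ ℝ E) :=
  TopologicalSpace.coinduced
    (fun v : {v : E // v ≠ 0} => Projectivization.mk ℝ v.1 v.2) inferInstance

variable {d : ℕ}

/-- The representative of `p` in the affine chart determined by a linear functional `f`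
(the chart is the complement of the projective hyperplane `P(ker f)`, identified with the
affine hyperplane `{f = 1}`); this is independent of the choice of lift of `p`. -/
def chartRep (f : (Fin d → ℝ) →ₗ[ℝ] ℝ) (p : ℙ ℝ (Fin d → ℝ)) : Fin d → ℝ :=
  (f p.rep)⁻¹ • p.rep

/-- The convex hull of `X ⊂ P(ℝ^d)` computed in the affine chart determined by `f`,
regarded again as a subset of `P(ℝ^d)`. -/
def chartHull (f : (Fin d → ℝ) →ₗ[ℝ] ℝ) (X : Set (ℙ ℝ (Fin d → ℝ))) :
    Set (ℙ ℝ (Fin d → ℝ)) :=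
  {p | ∃ v, ∃ hv : v ≠ 0, v ∈ convexHull ℝ (chartRep f '' X) ∧ p = Projectivization.mk ℝ v hv}

theorem Projectivization.isOpen_setOf_rep_mem {E : Type*} [AddCommGroup E] [Module ℝ E]
    [TopologicalSpace E] {U : Set E} (hU : IsOpen U)
    (hsmul : ∀ (a : ℝˣ) (v : E), v ∈ U → a • v ∈ U) :
    IsOpen {p : ℙ ℝ E | p.rep ∈ U} := by
  rw [projTopology, isOpen_coinduced]
  convert hU.preimage continuous_subtype_val using 1
  ext ⟨v, hv⟩
  obtain ⟨a, ha⟩ := exists_smul_eq_mk_rep ℝ v hv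
  change (mk ℝ v hv).rep ∈ U ↔ v ∈ U
  rw [← ha]
  exact ⟨fun h => by simpa using hsmul a⁻¹ _ h, hsmul a v⟩

theorem chartRep_neg (f : (Fin d → ℝ) →ₗ[ℝ] ℝ) (p : ℙ ℝ (Fin d → ℝ)) :
    chartRep (-f) p = -chartRep f p := by
  simp [chartRep, inv_neg, neg_smul]

theorem chartHull_neg (f : (Fin d → ℝ) →ₗ[ℝ] ℝ) (X : Set (ℙ ℝ (Fin d → ℝ))) :
    chartHull (-f) X = chartHull f X := by
  have hneg : ∀ (v : Fin d → ℝ) (hv : v ≠ 0), mk ℝ (-v) (neg_ne_zero.2 hv) = mk ℝ v hv :=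
    fun v hv => (mk_eq_mk_iff' ℝ _ _ _ _).2 ⟨-1, by simp⟩
  have hull : convexHull ℝ (chartRep (-f) '' X) = -convexHull ℝ (chartRep f '' X) := by
    rw [← convexHull_neg, ← Set.image_neg_eq_neg, Set.image_image]
    simp only [chartRep_neg]
  ext p
  constructor
  · rintro ⟨v, hv, hmem, rfl⟩
    rw [hull] at hmem
    exact ⟨-v, neg_ne_zero.2 hv, hmem, (hneg v hv).symm⟩
  · rintro ⟨v, hv, hmem, rfl⟩
    refine ⟨-v, neg_ne_zero.2 hv, ?_, (hneg v hv).symm⟩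
    rwa [hull, Set.neg_mem_neg]

theorem chartRep_eq_smul_chartRep {f₁ f₂ : (Fin d → ℝ) →ₗ[ℝ] ℝ} {p : ℙ ℝ (Fin d → ℝ)}
    (h₂ : f₂ p.rep ≠ 0) : chartRep f₁ p = (f₂ p.rep / f₁ p.rep) • chartRep f₂ p := by
  rw [chartRep, chartRep, smul_smul]
  congr 1
  field_simp

theorem chartHull_subset_of_pos {f₁ f₂ : (Fin d → ℝ) →ₗ[ℝ] ℝ} {X : Set (ℙ ℝ (Fin d → ℝ))}
    (hpos : ∀ p ∈ X, 0 < f₁ p.rep * f₂ p.rep) : chartHull f₁ X ⊆ chartHull f₂ X := by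
  set C := convexHull ℝ (chartRep f₂ '' X)
  have hcone : convexHull ℝ (chartRep f₁ '' X) ⊆ ConvexCone.hull ℝ C := by
    refine convexHull_min ?_ (ConvexCone.convex _)
    rintro _ ⟨p, hp, rfl⟩
    have hp₂ : f₂ p.rep ≠ 0 := right_ne_zero_of_mul (hpos p hp).ne'
    refine (ConvexCone.mem_hull_of_convex (convex_convexHull ℝ _)).2 ⟨_, ?_,
      _, subset_convexHull ℝ _ ⟨p, hp, rfl⟩, (chartRep_eq_smul_chartRep hp₂).symm⟩
    exact div_pos_iff.2 ((mul_pos_iff.1 (hpos p hp)).imp And.symm And.symm)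
  rintro _ ⟨v, hv, hmem, rfl⟩
  obtain ⟨c, -, y, hy, rfl⟩ :=
    (ConvexCone.mem_hull_of_convex (convex_convexHull ℝ _)).1 (hcone hmem)
  have hy₀ : y ≠ 0 := right_ne_zero_of_smul hv
  exact ⟨y, hy₀, hy, (mk_eq_mk_iff' ℝ _ _ _ _).2 ⟨c, rfl⟩⟩

theorem chartHull_eq_of_pos {f₁ f₂ : (Fin d → ℝ) →ₗ[ℝ] ℝ} {X : Set (ℙ ℝ (Fin d → ℝ))}
    (hpos : ∀ p ∈ X, 0 < f₁ p.rep * f₂ p.rep) : chartHull f₁ X = chartHull f₂ X :=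
  (chartHull_subset_of_pos hpos).antisymm
    (chartHull_subset_of_pos fun p hp => mul_comm (f₁ p.rep) _ ▸ hpos p hp)

theorem mul_rep_pos_or_neg_of_isPreconnected {X : Set (ℙ ℝ (Fin d → ℝ))} (hX : IsPreconnected X)
    {f₁ f₂ : (Fin d → ℝ) →ₗ[ℝ] ℝ} (hX₁ : ∀ p ∈ X, f₁ p.rep ≠ 0) (hX₂ : ∀ p ∈ X, f₂ p.rep ≠ 0) :
    (∀ p ∈ X, 0 < f₁ p.rep * f₂ p.rep) ∨ (∀ p ∈ X, f₁ p.rep * f₂ p.rep < 0) := by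
  set q : (Fin d → ℝ) → ℝ := fun v => f₁ v * f₂ v
  have hq : Continuous q :=
    f₁.continuous_of_finiteDimensional.mul f₂.continuous_of_finiteDimensional
  have hq_smul : ∀ (a : ℝˣ) v, q (a • v) = (a : ℝ) ^ 2 * q v := fun a v => by
    simp only [q, Units.smul_def, map_smul, smul_eq_mul]
    ring
  have ha : ∀ a : ℝˣ, 0 < (a : ℝ) ^ 2 := fun a => sq_pos_of_ne_zero a.ne_zero
  have hpos := isOpen_setOf_rep_mem (isOpen_lt continuous_const hq) fun a v (hv : 0 < q v) =>
    show 0 < q (a • v) by rw [hq_smul]; exact mul_pos (ha a) hv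
  have hneg := isOpen_setOf_rep_mem (isOpen_lt hq continuous_const) fun a v (hv : q v < 0) =>
    show q (a • v) < 0 by rw [hq_smul]; exact mul_neg_of_pos_of_neg (ha a) hv
  refine hX.subset_or_subset hpos hneg ?_ fun p hp => ?_
  · exact Set.disjoint_left.2 fun p (h₁ : 0 < q p.rep) (h₂ : q p.rep < 0) => h₁.not_gt h₂
  · exact (mul_ne_zero (hX₁ p hp) (hX₂ p hp)).lt_or_gt.symm

theorem stmt3_general (d : ℕ) (X : Set (ℙ ℝ (Fin d → ℝ))) (hX : IsConnected X)
    (f₁ f₂ : (Fin d → ℝ) →ₗ[ℝ] ℝ)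
    (hX₁ : ∀ p ∈ X, f₁ p.rep ≠ 0) (hX₂ : ∀ p ∈ X, f₂ p.rep ≠ 0) :
    chartHull f₁ X = chartHull f₂ X := by
  rcases mul_rep_pos_or_neg_of_isPreconnected hX.isPreconnected hX₁ hX₂ with hpos | hneg
  · exact chartHull_eq_of_pos hpos
  · rw [← chartHull_neg f₂]
    exact chartHull_eq_of_pos fun p hp => by simpa using neg_pos.2 (hneg p hp)

/-- [IZ2019, Lem. 5.9]: if `X ⊂ P(ℝ^d)` is connected and is contained in the
affine charts determined by `f₁` and by `f₂`, then the convex hulls of `X` computed in the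
two charts agree. -/
theorem stmt3 (d : ℕ) (X : Set (ℙ ℝ (Fin d → ℝ))) (hX : IsConnected X)
    (f₁ f₂ : (Fin d → ℝ) →ₗ[ℝ] ℝ) (hf₁ : f₁ ≠ 0) (hf₂ : f₂ ≠ 0)
    (hX₁ : ∀ p ∈ X, f₁ p.rep ≠ 0) (hX₂ : ∀ p ∈ X, f₂ p.rep ≠ 0) :
    chartHull f₁ X = chartHull f₂ X :=
  stmt3_general d X hX f₁ f₂ hX₁ hX₂
end
end

section
/- Let d be even and let τ: SL(2,ℝ) → SL(d,ℝ) be the standard irreducible representation on homogeneous polynomials of degree d−1 in variables x₁, x₂ (acting by τ(g)f = f ∘ g^{-1}). Then there is no properly convex domain Ω ⊂ P(ℝ^d) invariant under the image of τ. -/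
noncomputable section

open Projectivization Matrix MvPolynomial
open scoped LinearAlgebra.Projectivization MatrixGroups

variable {d : ℕ}

/-- `Ω ⊂ P(ℝ^d)` is a properly convex domain: open, and bounded and convex in some affine
chart. -/
def IsPCDomain (Ω : Set (ℙ ℝ (Fin d → ℝ))) : Prop :=
  IsOpen Ω ∧ ∃ (f : (Fin d → ℝ) →ₗ[ℝ] ℝ) (S : Set (Fin d → ℝ)),
    Convex ℝ S ∧ Bornology.IsBounded S ∧ (∀ v ∈ S, f v = 1) ∧
    Ω = {p | ∃ v, ∃ hv : v ≠ 0, v ∈ S ∧ p = Projectivization.mk ℝ v hv}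

/-!
A properly convex domain lies in an affine chart `{f = 1}`, so every point of `Ω` has lifts on
which `f` does not vanish. The rotations `R θ`, `0 ≤ θ ≤ π`, form a path in `SL(2,ℝ)` from `1`
to `-1`, and `τ(-1) = (-1)^(d-1) = -1` since `d - 1` is odd. Along this path the function
`θ ↦ f (τ(R θ) v)` is continuous (it is polynomial in the entries of `R θ`) and goes from `f v`
to `-f v`, so it vanishes somewhere: the point `τ(R θ) [v]` then lies outside the chart,
contradicting invariance.
-/

namespace MvPolynomial

variable {σ R : Type*}

section

variable [CommSemiring R]

theorem IsHomogeneous.aeval_smul_X {P : MvPolynomial σ R} {n : ℕ} (hP : P.IsHomogeneous n)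
    (c : R) : MvPolynomial.aeval (c • X) P = c ^ n • P := by
  conv_lhs => rw [P.as_sum]
  conv_rhs => rw [P.as_sum]
  rw [map_sum, Finset.smul_sum]
  refine Finset.sum_congr rfl fun s hs => ?_
  have hdeg : s.degree = n := by
    by_contra h
    exact mem_support_iff.1 hs (hP.coeff_eq_zero h)
  simp only [aeval_monomial, Pi.smul_apply, smul_pow, Finsupp.prod]
  rw [Finset.prod_smul, Finset.prod_pow_eq_pow_sum, ← Finsupp.degree_apply, hdeg, monomial_eq,
    Finsupp.prod, mul_smul_comm]
  rfl

theorem IsHomogeneous.aeval_neg_X {R : Type*} [CommRing R] {P : MvPolynomial σ R} {n : ℕ}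
    (hP : P.IsHomogeneous n) : MvPolynomial.aeval (-X) P = (-1 : R) ^ n • P := by
  have h := hP.aeval_smul_X (-1)
  rwa [neg_one_smul] at h

variable [Fintype σ]

def linSubst (c : Matrix σ σ R) : σ → MvPolynomial σ R := fun i => ∑ j, C (c i j) * X j

theorem linSubst_one [DecidableEq σ] : linSubst (1 : Matrix σ σ R) = X := by
  funext i
  simp [linSubst, Matrix.one_apply]

theorem linSubst_neg {R : Type*} [CommRing R] (c : Matrix σ σ R) :
    linSubst (-c) = -linSubst c := by
  funext i
  simp [linSubst, Finset.sum_neg_distrib]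

theorem continuous_aeval_linSubst [TopologicalSpace R] [IsTopologicalSemiring R]
    (p : MvPolynomial σ R) (L : MvPolynomial σ R →ₗ[R] R) :
    Continuous fun c : Matrix σ σ R => L (aeval (linSubst c) p) := by
  induction p using MvPolynomial.induction_on generalizing L with
  | C a => simpa only [aeval_C] using continuous_const
  | add p q hp hq =>
    simp only [map_add]
    exact (hp L).add (hq L)
  | mul_X p i hp =>
    have expand : ∀ c : Matrix σ σ R, L (aeval (linSubst c) (p * X i)) =
        ∑ j, c i j * (L ∘ₗ LinearMap.mulRight R (X j)) (aeval (linSubst c) p) := by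
      intro c
      simp only [_root_.map_mul, aeval_X, linSubst, Finset.mul_sum, map_sum]
      refine Finset.sum_congr rfl fun j _ => ?_
      rw [LinearMap.comp_apply, LinearMap.mulRight_apply, ← smul_eq_mul (c i j), ← map_smul,
        smul_eq_C_mul]
      ring_nf
    simp_rw [expand]
    exact continuous_finsetSum _ fun j _ => (continuous_id.matrix_elem i j).mul (hp _)

end

end MvPolynomial

open Real

namespace Matrix.SpecialLinearGroup

def rotation (θ : ℝ) : SpecialLinearGroup (Fin 2) ℝ :=
  ⟨!![cos θ, -sin θ; sin θ, cos θ], by simp [det_fin_two_of, ← sq]⟩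

theorem continuous_coe_rotation :
    Continuous fun θ => (rotation θ : Matrix (Fin 2) (Fin 2) ℝ) := by
  refine continuous_matrix fun i j => ?_
  fin_cases i <;> fin_cases j <;> simp [rotation] <;> fun_prop

theorem coe_rotation_zero : (rotation 0 : Matrix (Fin 2) (Fin 2) ℝ) = 1 := by
  simp [rotation, one_fin_two]

theorem coe_rotation_pi : (rotation π : Matrix (Fin 2) (Fin 2) ℝ) = -1 := by
  simp [rotation, one_fin_two]

end Matrix.SpecialLinearGroup

namespace Projectivization

variable {K V : Type*} [Field K] [AddCommGroup V] [Module K V]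

theorem apply_ne_zero_of_mk_mem {f : V →ₗ[K] K} {S : Set V} (hf : ∀ v ∈ S, f v = 1) {w : V}
    (hw : w ≠ 0) (h : mk K w hw ∈ {p | ∃ v, ∃ hv : v ≠ 0, v ∈ S ∧ p = mk K v hv}) :
    f w ≠ 0 := by
  obtain ⟨v, hv, hvS, hwv⟩ := h
  obtain ⟨a, rfl⟩ := (mk_eq_mk_iff K w v hw hv).1 hwv
  simp [Units.smul_def, hf v hvS]

theorem apply_ne_zero_of_image_map_eq {f : V →ₗ[K] K} {S : Set V} (hf : ∀ v ∈ S, f v = 1)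
    {A : V ≃ₗ[K] V} (hA : map A.toLinearMap A.injective ''
      {p | ∃ v, ∃ hv : v ≠ 0, v ∈ S ∧ p = mk K v hv} =
      {p | ∃ v, ∃ hv : v ≠ 0, v ∈ S ∧ p = mk K v hv})
    {v : V} (hv : v ≠ 0) (hvS : v ∈ S) : f (A v) ≠ 0 := by
  refine apply_ne_zero_of_mk_mem hf (A.map_ne_zero_iff.2 hv) ?_
  rw [← hA]
  exact ⟨mk K v hv, ⟨v, hv, hvS, rfl⟩, map_mk _ _ _ _⟩

end Projectivization

theorem stmt11_general (d : ℕ) (hd : Even d)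
    (φ : (Fin d → ℝ) ≃ₗ[ℝ] MvPolynomial.homogeneousSubmodule (Fin 2) ℝ (d - 1))
    (T : Matrix.SpecialLinearGroup (Fin 2) ℝ → ((Fin d → ℝ) ≃ₗ[ℝ] (Fin d → ℝ)))
    (hT : ∀ (g : Matrix.SpecialLinearGroup (Fin 2) ℝ) (v : Fin d → ℝ),
      ((φ (T g v) : MvPolynomial (Fin 2) ℝ)) =
        MvPolynomial.aeval
          (fun i => ∑ j, MvPolynomial.C
            (((g⁻¹ : Matrix.SpecialLinearGroup (Fin 2) ℝ) : Matrix (Fin 2) (Fin 2) ℝ) i j) *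
              MvPolynomial.X j)
          ((φ v : MvPolynomial (Fin 2) ℝ))) :
    ¬ ∃ Ω : Set (ℙ ℝ (Fin d → ℝ)), IsPCDomain Ω ∧ Ω.Nonempty ∧
        ∀ g, Projectivization.map (T g).toLinearMap (T g).injective '' Ω = Ω := by
  rintro ⟨Ω, ⟨-, f, S, -, -, hf, rfl⟩, ⟨-, v, hv, hvS, rfl⟩, hinv⟩
  have hodd : Odd (d - 1) := by
    have hd0 : d ≠ 0 := by rintro rfl; exact hv (Subsingleton.elim _ _)
    exact Nat.Even.sub_odd (Nat.one_le_iff_ne_zero.2 hd0) hd odd_one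
  -- `f ∘ φ⁻¹` extended to all polynomials, the setting of `continuous_aeval_linSubst`
  obtain ⟨L, hL⟩ := LinearMap.exists_extend (f ∘ₗ φ.symm.toLinearMap)
  have hLφ : ∀ w, L (φ w) = f w := fun w => by simpa using LinearMap.congr_fun hL (φ w)
  set F : ℝ → ℝ := fun θ =>
    L (aeval (linSubst (SpecialLinearGroup.rotation θ : Matrix (Fin 2) (Fin 2) ℝ))
      (φ v : MvPolynomial (Fin 2) ℝ))
  have hF : ∀ θ, F θ = f (T (SpecialLinearGroup.rotation θ)⁻¹ v) := fun θ => by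
    rw [← hLφ, hT, inv_inv]; rfl
  have hF0 : F 0 = 1 := by
    simp only [F, SpecialLinearGroup.coe_rotation_zero, linSubst_one, aeval_X_left_apply, hLφ,
      hf v hvS]
  have hFπ : F π = -1 := by
    simp only [F, SpecialLinearGroup.coe_rotation_pi, linSubst_neg, linSubst_one,
      ((mem_homogeneousSubmodule _ _).1 (φ v).2).aeval_neg_X, hodd.neg_one_pow, neg_one_smul,
      map_neg, hLφ, hf v hvS]
  obtain ⟨θ, -, hθ⟩ := intermediate_value_Icc' pi_pos.le
    ((continuous_aeval_linSubst _ L).comp SpecialLinearGroup.continuous_coe_rotation).continuousOn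
    (show (0 : ℝ) ∈ Set.Icc (F π) (F 0) by rw [hF0, hFπ]; norm_num)
  exact apply_ne_zero_of_image_map_eq hf (hinv (SpecialLinearGroup.rotation θ)⁻¹) hv hvS
    (hF θ ▸ hθ)

/-- let `d` be even and let `τ : SL(2,ℝ) → SL(d,ℝ)` be the standard
irreducible representation on homogeneous polynomials of degree `d−1` in `x₁, x₂`, acting
by `τ(g)f = f ∘ g⁻¹`.  Then no properly convex domain `Ω ⊂ P(ℝ^d)` is invariant under the
(projectivized) image of `τ`.  Here `ℝ^d` is identified with the homogeneous polynomials of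
degree `d−1` by a linear isomorphism `φ`, and `T g` is the corresponding action of `g`. -/
theorem stmt11 (d : ℕ) (hd : Even d) (hd1 : 1 ≤ d)
    (φ : (Fin d → ℝ) ≃ₗ[ℝ] MvPolynomial.homogeneousSubmodule (Fin 2) ℝ (d - 1))
    (T : Matrix.SpecialLinearGroup (Fin 2) ℝ → ((Fin d → ℝ) ≃ₗ[ℝ] (Fin d → ℝ)))
    (hT : ∀ (g : Matrix.SpecialLinearGroup (Fin 2) ℝ) (v : Fin d → ℝ),
      ((φ (T g v) : MvPolynomial (Fin 2) ℝ)) =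
        MvPolynomial.aeval
          (fun i => ∑ j, MvPolynomial.C
            (((g⁻¹ : Matrix.SpecialLinearGroup (Fin 2) ℝ) : Matrix (Fin 2) (Fin 2) ℝ) i j) *
              MvPolynomial.X j)
          ((φ v : MvPolynomial (Fin 2) ℝ))) :
    ¬ ∃ Ω : Set (ℙ ℝ (Fin d → ℝ)), IsPCDomain Ω ∧ Ω.Nonempty ∧
        ∀ g, Projectivization.map (T g).toLinearMap (T g).injective '' Ω = Ω :=
  stmt11_general d hd φ T hT
end
end
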